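/- arXiv:1707.07645 — 2 statements merged into one kernel-verified Lean document; each statement's English description precedes it below -/
import Mathlib

section
/- Let u, w : ℝ³ → ℝ be functions of (t,x,y) of class C², and let λ ∈ ℝ. Suppose that at every point of ℝ³ one has w_t = (λ² − λ·u_x − u_y)·w_x and w_y = (λ − u_x)·w_x. Then at every point p where w_x(p) ≠ 0, the function u satisfies u_yy = u_tx + u_y·u_xx − u_x·u_xy at p. -/
/-!
Differentiating `w_t = A w_x` in `y` and `w_y = B w_x` in `t`, and substituting the two equations
back for the mixed derivatives `w_xt`, `w_xy`, the terms in `w_xx` cancel by equality of mixed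
partials and leave the zero-curvature condition `(A_y - B_t + A B_x - B A_x) w_x = 0`. For
`A = λ² - λ u_x - u_y` and `B = λ - u_x` the bracket is `u_tx + u_y u_xx - u_x u_xy - u_yy`.
-/

/-- Partial derivative of `f : ℝ³ → ℝ` in the direction `v`. -/
noncomputable def pd3 (v : ℝ × ℝ × ℝ) (f : ℝ × ℝ × ℝ → ℝ) : ℝ × ℝ × ℝ → ℝ :=
  fun p => fderiv ℝ f p v

noncomputable def dt : (ℝ × ℝ × ℝ → ℝ) → ℝ × ℝ × ℝ → ℝ := pd3 (1, 0, 0)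
noncomputable def dx : (ℝ × ℝ × ℝ → ℝ) → ℝ × ℝ × ℝ → ℝ := pd3 (0, 1, 0)
noncomputable def dy : (ℝ × ℝ × ℝ → ℝ) → ℝ × ℝ × ℝ → ℝ := pd3 (0, 0, 1)

open Filter Topology

section Pd3

variable {f g : ℝ × ℝ × ℝ → ℝ} {v p : ℝ × ℝ × ℝ}

lemma differentiableAt_pd3 (hf : ContDiffAt ℝ 2 f p) : DifferentiableAt ℝ (pd3 v f) p :=
  ((hf.fderiv_right (m := 1) (by norm_num)).differentiableAt one_ne_zero).clm_apply
    (differentiableAt_const v)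

lemma pd3_comm (hf : ContDiffAt ℝ 2 f p) (v w : ℝ × ℝ × ℝ) :
    pd3 v (pd3 w f) p = pd3 w (pd3 v f) p := by
  have hd : DifferentiableAt ℝ (fderiv ℝ f) p :=
    (hf.fderiv_right (m := 1) (by norm_num)).differentiableAt one_ne_zero
  have hsnd : ∀ a b, pd3 a (pd3 b f) p = fderiv ℝ (fderiv ℝ f) p a b := fun a b => by
    change fderiv ℝ (fun q => fderiv ℝ f q b) p a = _
    simp [fderiv_clm_apply hd (differentiableAt_const b)]
  rw [hsnd, hsnd, (hf.isSymmSndFDerivAt (by simp)) v w]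

lemma Filter.EventuallyEq.pd3_eq (h : f =ᶠ[𝓝 p] g) : pd3 v f p = pd3 v g p := by
  rw [pd3, pd3, h.fderiv_eq]

lemma pd3_mul (hf : DifferentiableAt ℝ f p) (hg : DifferentiableAt ℝ g p) :
    pd3 v (fun q => f q * g q) p = pd3 v f p * g p + f p * pd3 v g p := by
  simp only [pd3, fderiv_fun_mul hf hg, add_apply, smul_apply, smul_eq_mul]
  ring

lemma pd3_sub (hf : DifferentiableAt ℝ f p) (hg : DifferentiableAt ℝ g p) :
    pd3 v (fun q => f q - g q) p = pd3 v f p - pd3 v g p := by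
  simp only [pd3, fderiv_fun_sub hf hg, sub_apply]

lemma pd3_const (c : ℝ) : pd3 v (fun _ => c) p = 0 := by
  simp only [pd3, fderiv_const_apply, zero_apply]

lemma pd3_const_mul (hf : DifferentiableAt ℝ f p) (c : ℝ) :
    pd3 v (fun q => c * f q) p = c * pd3 v f p := by
  simp only [pd3, fderiv_const_mul hf, smul_apply, smul_eq_mul]

end Pd3

theorem zero_curvature_of_lax_pair {w A B : ℝ × ℝ × ℝ → ℝ} {a b c p : ℝ × ℝ × ℝ}
    (hw : ContDiffAt ℝ 2 w p) (hA : DifferentiableAt ℝ A p) (hB : DifferentiableAt ℝ B p)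
    (ha : pd3 a w =ᶠ[𝓝 p] fun q => A q * pd3 c w q)
    (hb : pd3 b w =ᶠ[𝓝 p] fun q => B q * pd3 c w q) :
    (pd3 b A p - pd3 a B p + A p * pd3 c B p - B p * pd3 c A p) * pd3 c w p = 0 := by
  have hwc : DifferentiableAt ℝ (pd3 c w) p := differentiableAt_pd3 hw
  have hba : pd3 b (pd3 a w) p = pd3 b A p * pd3 c w p + A p * pd3 b (pd3 c w) p := by
    rw [ha.pd3_eq, pd3_mul hA hwc]
  have hab : pd3 a (pd3 b w) p = pd3 a B p * pd3 c w p + B p * pd3 a (pd3 c w) p := by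
    rw [hb.pd3_eq, pd3_mul hB hwc]
  have hcb : pd3 c (pd3 b w) p = pd3 c B p * pd3 c w p + B p * pd3 c (pd3 c w) p := by
    rw [hb.pd3_eq, pd3_mul hB hwc]
  have hca : pd3 c (pd3 a w) p = pd3 c A p * pd3 c w p + A p * pd3 c (pd3 c w) p := by
    rw [ha.pd3_eq, pd3_mul hA hwc]
  linear_combination -hba + hab - A p * hcb + B p * hca - pd3_comm hw a b
    - A p * pd3_comm hw b c + B p * pd3_comm hw a c

/-- Compatibility of the Lax pair forces the Mikhalev equation wherever `w_x ≠ 0`. -/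
theorem lax_pair_implies_equation (u w : ℝ × ℝ × ℝ → ℝ) (l : ℝ)
    (hu : ContDiff ℝ 2 u) (hw : ContDiff ℝ 2 w)
    (h1 : ∀ p : ℝ × ℝ × ℝ, dt w p = (l ^ 2 - l * dx u p - dy u p) * dx w p)
    (h2 : ∀ p : ℝ × ℝ × ℝ, dy w p = (l - dx u p) * dx w p) :
    ∀ p : ℝ × ℝ × ℝ, dx w p ≠ 0 →
      dy (dy u) p = dt (dx u) p + dy u p * dx (dx u) p - dx u p * dx (dy u) p := by
  intro p hwx
  have hux : DifferentiableAt ℝ (dx u) p := differentiableAt_pd3 hu.contDiffAt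
  have huy : DifferentiableAt ℝ (dy u) p := differentiableAt_pd3 hu.contDiffAt
  have hcurv := zero_curvature_of_lax_pair hw.contDiffAt (by fun_prop) (by fun_prop)
    (.of_forall h1) (.of_forall h2)
  simp (disch := fun_prop) only [pd3_sub, pd3_const, pd3_const_mul, ← dt.eq_1, ← dx.eq_1,
    ← dy.eq_1] at hcurv
  have hmixed : dx (dy u) p = dy (dx u) p := pd3_comm hu.contDiffAt _ _
  linear_combination -(mul_eq_zero.mp hcurv).resolve_right hwx + l * hmixed
end

section
/- Let u : ℝ³ → ℝ be a C² solution of u_yy = u_tx + u_y·u_xx − u_x·u_xy, let T : ℝ → ℝ be a C² function, and let ε ∈ ℝ. Then the function v(t,x,y) := u(t, x + ε·T(t), y) − ε·T′(t)·y is again a solution of v_yy = v_tx + v_y·v_xx − v_x·v_xy on ℝ³. -/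
theorem ContDiff.pd3 {n : WithTop ℕ∞} {f : ℝ × ℝ × ℝ → ℝ} (hf : ContDiff ℝ (n + 1) f)
    (w : ℝ × ℝ × ℝ) : ContDiff ℝ n (pd3 w f) :=
  (hf.fderiv_right le_rfl).clm_apply contDiff_const

theorem pd3_fun_sub {f g : ℝ × ℝ × ℝ → ℝ} {p : ℝ × ℝ × ℝ} (hf : DifferentiableAt ℝ f p)
    (hg : DifferentiableAt ℝ g p) (w : ℝ × ℝ × ℝ) :
    pd3 w (fun q => f q - g q) p = pd3 w f p - pd3 w g p := by
  simp only [pd3, fderiv_fun_sub hf hg, sub_apply]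

section FunctionsOfTime

variable {S : ℝ → ℝ} {p : ℝ × ℝ × ℝ}

theorem hasFDerivAt_fst_comp {S' : ℝ} (hS : HasDerivAt S S' p.1) :
    HasFDerivAt (fun q : ℝ × ℝ × ℝ => S q.1) (S' • ContinuousLinearMap.fst ℝ ℝ (ℝ × ℝ)) p :=
  hS.comp_hasFDerivAt p hasFDerivAt_fst

theorem pd3_fst_comp (hS : DifferentiableAt ℝ S p.1) (w : ℝ × ℝ × ℝ) :
    pd3 w (fun q => S q.1) p = deriv S p.1 * w.1 := by
  simp [pd3, (hasFDerivAt_fst_comp hS.hasDerivAt).fderiv]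

theorem pd3_fst_comp_mul_snd_snd (hS : DifferentiableAt ℝ S p.1) (w : ℝ × ℝ × ℝ) :
    pd3 w (fun q => S q.1 * q.2.2) p = S p.1 * w.2.2 + deriv S p.1 * w.1 * p.2.2 := by
  have hy : HasFDerivAt (𝕜 := ℝ) (fun q : ℝ × ℝ × ℝ => q.2.2) _ p :=
    hasFDerivAt_snd.comp p hasFDerivAt_snd
  rw [pd3, ((hasFDerivAt_fst_comp hS.hasDerivAt).fun_mul hy).fderiv]
  simp
  ring

end FunctionsOfTime

def shear (ε : ℝ) (T : ℝ → ℝ) (q : ℝ × ℝ × ℝ) : ℝ × ℝ × ℝ := (q.1, q.2.1 + ε * T q.1, q.2.2)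

section Shear

variable {ε : ℝ} {T S : ℝ → ℝ} {f : ℝ × ℝ × ℝ → ℝ} {p : ℝ × ℝ × ℝ}
  (hT : DifferentiableAt ℝ T p.1)
include hT

theorem hasFDerivAt_shear :
    HasFDerivAt (shear ε T) (ContinuousLinearMap.id ℝ (ℝ × ℝ × ℝ) + (ε * deriv T p.1) •
      (ContinuousLinearMap.inr ℝ ℝ (ℝ × ℝ) ∘L ContinuousLinearMap.inl ℝ ℝ ℝ ∘L
        ContinuousLinearMap.fst ℝ ℝ (ℝ × ℝ))) p := by
  have ht : HasFDerivAt (𝕜 := ℝ) (fun q : ℝ × ℝ × ℝ => q.1) _ p := hasFDerivAt_fst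
  have hx : HasFDerivAt (𝕜 := ℝ) (fun q : ℝ × ℝ × ℝ => q.2.1) _ p :=
    hasFDerivAt_fst.comp p hasFDerivAt_snd
  have hy : HasFDerivAt (𝕜 := ℝ) (fun q : ℝ × ℝ × ℝ => q.2.2) _ p :=
    hasFDerivAt_snd.comp p hasFDerivAt_snd
  have h : HasFDerivAt (shear ε T) _ p :=
    ht.prodMk ((hx.add ((hasFDerivAt_fst_comp hT.hasDerivAt).const_mul ε)).prodMk hy)
  refine h.congr_fderiv ?_
  ext <;> simp

theorem differentiableAt_comp_shear (hf : DifferentiableAt ℝ f (shear ε T p)) :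
    DifferentiableAt ℝ (fun q => f (shear ε T q)) p :=
  hf.comp p (hasFDerivAt_shear hT).differentiableAt

theorem pd3_comp_shear (hf : DifferentiableAt ℝ f (shear ε T p)) (w : ℝ × ℝ × ℝ) :
    pd3 w (fun q => f (shear ε T q)) p
      = pd3 w f (shear ε T p) + ε * deriv T p.1 * w.1 * dx f (shear ε T p) := by
  have hw : ((0 : ℝ), w.1, (0 : ℝ)) = w.1 • ((0 : ℝ), (1 : ℝ), (0 : ℝ)) := by simp
  rw [pd3, ← Function.comp_def, fderiv_comp p hf (hasFDerivAt_shear hT).differentiableAt,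
    (hasFDerivAt_shear hT).fderiv]
  simp only [ContinuousLinearMap.comp_apply, add_apply, smul_apply,
    ContinuousLinearMap.id_apply, ContinuousLinearMap.coe_fst', ContinuousLinearMap.inl_apply,
    ContinuousLinearMap.inr_apply, hw, map_add, map_smul, smul_eq_mul, dx, pd3]
  ring

theorem pd3_comp_shear_of_fst_eq_zero (hf : DifferentiableAt ℝ f (shear ε T p))
    {w : ℝ × ℝ × ℝ} (hw : w.1 = 0) :
    pd3 w (fun q => f (shear ε T q)) p = pd3 w f (shear ε T p) := by
  simp [pd3_comp_shear hT hf, hw]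

theorem dx_comp_shear (hf : DifferentiableAt ℝ f (shear ε T p)) :
    dx (fun q => f (shear ε T q)) p = dx f (shear ε T p) :=
  pd3_comp_shear_of_fst_eq_zero hT hf rfl

theorem dt_comp_shear (hf : DifferentiableAt ℝ f (shear ε T p)) :
    dt (fun q => f (shear ε T q)) p
      = dt f (shear ε T p) + ε * deriv T p.1 * dx f (shear ε T p) := by
  simpa [dt] using pd3_comp_shear hT hf (1, 0, 0)

theorem dx_comp_shear_sub_mul_snd_snd (hf : DifferentiableAt ℝ f (shear ε T p))
    (hS : DifferentiableAt ℝ S p.1) :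
    dx (fun q => f (shear ε T q) - S q.1 * q.2.2) p = dx f (shear ε T p) := by
  rw [dx, pd3_fun_sub (differentiableAt_comp_shear hT hf) (by fun_prop),
    pd3_comp_shear_of_fst_eq_zero hT hf rfl, pd3_fst_comp_mul_snd_snd hS]
  simp

theorem dy_comp_shear_sub_mul_snd_snd (hf : DifferentiableAt ℝ f (shear ε T p))
    (hS : DifferentiableAt ℝ S p.1) :
    dy (fun q => f (shear ε T q) - S q.1 * q.2.2) p = dy f (shear ε T p) - S p.1 := by
  rw [dy, pd3_fun_sub (differentiableAt_comp_shear hT hf) (by fun_prop),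
    pd3_comp_shear_of_fst_eq_zero hT hf rfl, pd3_fst_comp_mul_snd_snd hS]
  simp

theorem dx_comp_shear_sub (hf : DifferentiableAt ℝ f (shear ε T p))
    (hS : DifferentiableAt ℝ S p.1) :
    dx (fun q => f (shear ε T q) - S q.1) p = dx f (shear ε T p) := by
  rw [dx, pd3_fun_sub (differentiableAt_comp_shear hT hf) (by fun_prop),
    pd3_comp_shear_of_fst_eq_zero hT hf rfl, pd3_fst_comp hS]
  simp

theorem dy_comp_shear_sub (hf : DifferentiableAt ℝ f (shear ε T p))
    (hS : DifferentiableAt ℝ S p.1) :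
    dy (fun q => f (shear ε T q) - S q.1) p = dy f (shear ε T p) := by
  rw [dy, pd3_fun_sub (differentiableAt_comp_shear hT hf) (by fun_prop),
    pd3_comp_shear_of_fst_eq_zero hT hf rfl, pd3_fst_comp hS]
  simp

end Shear

theorem theta4_flow_maps_solutions (u : ℝ × ℝ × ℝ → ℝ) (hu : ContDiff ℝ 2 u)
    (T : ℝ → ℝ) (hT : ContDiff ℝ 2 T) (ε : ℝ)
    (heq : ∀ p : ℝ × ℝ × ℝ,
      dy (dy u) p = dt (dx u) p + dy u p * dx (dx u) p - dx u p * dx (dy u) p) :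
    ∀ p : ℝ × ℝ × ℝ,
      (fun v : ℝ × ℝ × ℝ → ℝ =>
        dy (dy v) p = dt (dx v) p + dy v p * dx (dx v) p - dx v p * dx (dy v) p)
      (fun q => u (q.1, q.2.1 + ε * T q.1, q.2.2) - ε * deriv T q.1 * q.2.2) := by
  intro p
  have hT' : Differentiable ℝ T := hT.differentiable two_ne_zero
  have hS : Differentiable ℝ (fun t => ε * deriv T t) := hT.differentiable_deriv_two.const_mul ε
  have hu' : Differentiable ℝ u := hu.differentiable two_ne_zero
  have hux : Differentiable ℝ (dx u) := (hu.pd3 (n := 1) _).differentiable one_ne_zero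
  have huy : Differentiable ℝ (dy u) := (hu.pd3 (n := 1) _).differentiable one_ne_zero
  let v : ℝ × ℝ × ℝ → ℝ := fun q => u (shear ε T q) - ε * deriv T q.1 * q.2.2
  have hvx : dx v = fun q => dx u (shear ε T q) :=
    funext fun q => dx_comp_shear_sub_mul_snd_snd (hT' _) (hu' _) (hS _)
  have hvy : dy v = fun q => dy u (shear ε T q) - ε * deriv T q.1 :=
    funext fun q => dy_comp_shear_sub_mul_snd_snd (hT' _) (hu' _) (hS _)
  show dy (dy v) p = dt (dx v) p + dy v p * dx (dx v) p - dx v p * dx (dy v) p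
  rw [hvx, hvy, dy_comp_shear_sub (hT' _) (huy _) (hS _), dx_comp_shear_sub (hT' _) (huy _) (hS _),
    dt_comp_shear (hT' _) (hux _), dx_comp_shear (hT' _) (hux _)]
  beta_reduce
  rw [heq]
  ring
end
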